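/- For all n, m ≥ 1, g(n+m) ≥ g(n)·g(m); that is, the sequence g is super-multiplicative. -/

import Mathlib

/-- `Separates G u v T` means every walk from `u` to `v` in `G` meets `T`;
for `u, v ∉ T` this says `u` and `v` lie in different connected components of `G \ T`. -/
def Separates {V : Type*} (G : SimpleGraph V) (u v : V) (T : Set V) : Prop :=
  ∀ p : G.Walk u v, ∃ x ∈ p.support, x ∈ T

/-- `T` is an inclusion-wise minimal `u`–`v` separator in `G`:
`T ⊆ V(G) \ {u, v}`, removing `T` puts `u` and `v` in different connected components,
and removing any proper subset `T' ⊊ T` leaves `u` and `v` in the same component. -/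
def IsMinSeparator {V : Type*} (G : SimpleGraph V) (u v : V) (T : Set V) : Prop :=
  u ∉ T ∧ v ∉ T ∧ Separates G u v T ∧ ∀ T' ⊂ T, ¬ Separates G u v T'

/-- `mc G u v` is the number of inclusion-wise minimal `u`–`v` separators in `G`. -/
noncomputable def mc {V : Type*} (G : SimpleGraph V) (u v : V) : ℕ :=
  {T : Set V | IsMinSeparator G u v T}.ncard

/-- `g n` is the maximum of `mc G u v` over graphs `G` on `n + 2` vertices and
pairs of distinct vertices `u ≠ v`. -/
noncomputable def g (n : ℕ) : ℕ :=
  sSup {k | ∃ (G : SimpleGraph (Fin (n + 2))) (u v : Fin (n + 2)), u ≠ v ∧ mc G u v = k}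

/-- `T` is a vertex cut of `G`: removing `T` disconnects `G`, i.e. some two remaining
vertices lie in different connected components of `G \ T`. -/
def IsCutSet {V : Type*} (G : SimpleGraph V) (T : Set V) : Prop :=
  ∃ u v, u ∉ T ∧ v ∉ T ∧ Separates G u v T

/-- `T` is an inclusion-wise minimal vertex cut of `G`. -/
def IsMinCutSet {V : Type*} (G : SimpleGraph V) (T : Set V) : Prop :=
  IsCutSet G T ∧ ∀ T' ⊂ T, ¬ IsCutSet G T'

/-- `c n` is the maximum number of inclusion-wise minimal vertex cuts of a graph
on `n` vertices. -/
noncomputable def c (n : ℕ) : ℕ :=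
  sSup {k | ∃ G : SimpleGraph (Fin n), {T : Set (Fin n) | IsMinCutSet G T}.ncard = k}

/-- The binary entropy function `H(x) = -x log₂ x - (1 - x) log₂ (1 - x)`. -/
noncomputable def binH (x : ℝ) : ℝ :=
  -x * Real.logb 2 x - (1 - x) * Real.logb 2 (1 - x)

/-- The outer neighbourhood of `X` in `G`: all vertices outside `X` having a
neighbour in `X`. -/
def outNbhd {V : Type*} (G : SimpleGraph V) (X : Set V) : Set V :=
  {y | y ∉ X ∧ ∃ x ∈ X, G.Adj x y}

/-- The vertex set of the connected component of `u` in `G \ T`: all vertices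
reachable from `u` by a walk avoiding `T`. -/
def compOf {V : Type*} (G : SimpleGraph V) (T : Set V) (u : V) : Set V :=
  {x | ∃ p : G.Walk u x, ∀ y ∈ p.support, y ∉ T}

variable {V W : Type*} {G : SimpleGraph V} {T : Set V} {u v : V}

lemma mem_compOf_self (hu : u ∉ T) : u ∈ compOf G T u :=
  ⟨SimpleGraph.Walk.nil, by simp [hu]⟩

lemma compOf_adj {x y : V} (hx : x ∈ compOf G T u) (h : G.Adj x y) (hy : y ∉ T) :
    y ∈ compOf G T u := by
  obtain ⟨p, hp⟩ := hx
  refine ⟨p.concat h, ?_⟩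
  intro z hz
  rw [SimpleGraph.Walk.support_concat, List.mem_append] at hz
  rcases hz with hz | hz
  · exact hp z hz
  · simp at hz; subst hz; exact hy

lemma closed_walk {C : Set V} (hC : ∀ ⦃x y : V⦄, x ∈ C → G.Adj x y → y ∉ T → y ∈ C) :
    ∀ {a b : V} (p : G.Walk a b), (∀ y ∈ p.support, y ∉ T) → a ∈ C → b ∈ C := by
  intro a b p
  induction p with
  | nil => intro _ h; exact h
  | @cons a b' b h q ih =>
    intro hs ha
    refine ih (fun y hy => hs y (by simp [hy])) (hC ha h (hs b' (by simp)))

lemma separates_iff : Separates G u v T ↔ v ∉ compOf G T u := by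
  constructor
  · rintro hsep ⟨p, hp⟩
    obtain ⟨x, hx, hxT⟩ := hsep p
    exact hp x hx hxT
  · intro hv p
    by_contra h
    push_neg at h
    exact hv ⟨p, h⟩

section Iso
variable {G' : SimpleGraph W}

lemma separates_map (φ : G ≃g G') (h : Separates G u v T) :
    Separates G' (φ u) (φ v) (φ '' T) := by
  intro p'
  have hp : ∀ x ∈ (p'.map φ.symm.toHom).support, x ∈ T →
      ∃ x ∈ p'.support, x ∈ φ '' T := by
    intro x hx hxT
    rw [SimpleGraph.Walk.support_map, List.mem_map] at hx
    obtain ⟨y, hy, hxy⟩ := hx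
    exact ⟨y, hy, x, hxT, by rw [← hxy]; simp⟩
  have := h ((p'.map φ.symm.toHom).copy (by simp) (by simp))
  obtain ⟨x, hx, hxT⟩ := this
  rw [SimpleGraph.Walk.support_copy] at hx
  exact hp x hx hxT

lemma minsep_map (φ : G ≃g G') (h : IsMinSeparator G u v T) :
    IsMinSeparator G' (φ u) (φ v) (φ '' T) := by
  obtain ⟨hu, hv, hsep, hmin⟩ := h
  refine ⟨?_, ?_, separates_map φ hsep, ?_⟩
  · rintro ⟨x, hx, hxe⟩; exact hu ((φ.injective hxe) ▸ hx)
  · rintro ⟨x, hx, hxe⟩; exact hv ((φ.injective hxe) ▸ hx)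
  · intro T'' hT'' hsep''
    have hT0 : (↑φ.symm : W → V) '' T'' ⊂ T := by
      constructor
      · rintro a ⟨b, hb, hba⟩
        have := hT''.1 hb
        obtain ⟨c, hc, hcb⟩ := this
        rwa [← hba, ← hcb, RelIso.symm_apply_apply]
      · intro hsub
        apply hT''.2
        rintro b ⟨a, ha, rfl⟩
        obtain ⟨c, hc, hca⟩ := hsub ha
        have : φ a = c := by rw [← hca]; simp
        rwa [this]
    apply hmin _ hT0
    have := separates_map φ.symm hsep''
    simpa using this
end Iso

lemma mc_map_eq {G' : SimpleGraph W} (φ : G ≃g G') (u v : V) :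
    mc G' (φ u) (φ v) = mc G u v := by
  unfold mc
  have himg : {T : Set W | IsMinSeparator G' (φ u) (φ v) T} =
      (Set.image (↑φ : V → W)) '' {T : Set V | IsMinSeparator G u v T} := by
    ext T'
    constructor
    · intro hT'
      refine ⟨(↑φ.symm : W → V) '' T', ?_, ?_⟩
      · have := minsep_map φ.symm hT'
        simpa using this
      · ext b; constructor
        · rintro ⟨a, ⟨c, hc, hca⟩, hab⟩
          rw [← hab, ← hca]; simpa using hc
        · intro hb
          exact ⟨φ.symm b, ⟨b, hb, rfl⟩, by simp⟩
    · rintro ⟨T, hT, rfl⟩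
      exact minsep_map φ hT
  rw [himg]
  exact Set.ncard_image_of_injOn ((Set.image_injective.mpr φ.injective).injOn)

section Glue
variable {V₁ V₂ : Type*} [DecidableEq V₂]

/-- The map identifying `u₂` with `u₁` and `v₂` with `v₁` in the glued vertex set. -/
def glueMap (u₁ v₁ : V₁) (u₂ v₂ : V₂) : V₂ → V₁ ⊕ {x : V₂ // x ≠ u₂ ∧ x ≠ v₂} :=
  fun x => if h : x = u₂ then Sum.inl u₁ else if h' : x = v₂ then Sum.inl v₁
    else Sum.inr ⟨x, h, h'⟩

variable {u₁ v₁ : V₁} {u₂ v₂ : V₂}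

lemma glueMap_u : glueMap u₁ v₁ u₂ v₂ u₂ = Sum.inl u₁ := by simp [glueMap]

lemma glueMap_v (h2 : u₂ ≠ v₂) : glueMap u₁ v₁ u₂ v₂ v₂ = Sum.inl v₁ := by
  simp [glueMap, h2.symm]

lemma glueMap_inj (h1 : u₁ ≠ v₁) : Function.Injective (glueMap u₁ v₁ u₂ v₂) := by
  intro x y hxy
  unfold glueMap at hxy
  split_ifs at hxy <;> simp_all

lemma glueMap_eq_inl {x : V₂} {a : V₁} (h : glueMap u₁ v₁ u₂ v₂ x = Sum.inl a) :
    (x = u₂ ∧ a = u₁) ∨ (x = v₂ ∧ a = v₁) := by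
  unfold glueMap at h
  split_ifs at h <;> simp_all

/-- The glued graph: disjoint union of `G₁` and `G₂` with `u₁ = u₂` and `v₁ = v₂`. -/
def glueGraph (G₁ : SimpleGraph V₁) (G₂ : SimpleGraph V₂) (u₁ v₁ : V₁) (u₂ v₂ : V₂)
    (h1 : u₁ ≠ v₁) : SimpleGraph (V₁ ⊕ {x : V₂ // x ≠ u₂ ∧ x ≠ v₂}) :=
  G₁.map (⟨Sum.inl, Sum.inl_injective⟩ : V₁ ↪ _) ⊔
    G₂.map (⟨glueMap u₁ v₁ u₂ v₂, glueMap_inj h1⟩ : V₂ ↪ _)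

variable {G₁ : SimpleGraph V₁} {G₂ : SimpleGraph V₂} {h1 : u₁ ≠ v₁}

lemma glueGraph_adj {x y : V₁ ⊕ {x : V₂ // x ≠ u₂ ∧ x ≠ v₂}} :
    (glueGraph G₁ G₂ u₁ v₁ u₂ v₂ h1).Adj x y ↔
      (∃ a b, G₁.Adj a b ∧ Sum.inl a = x ∧ Sum.inl b = y) ∨
      (∃ a b, G₂.Adj a b ∧ glueMap u₁ v₁ u₂ v₂ a = x ∧ glueMap u₁ v₁ u₂ v₂ b = y) := by
  rw [glueGraph, SimpleGraph.sup_adj, SimpleGraph.map_adj, SimpleGraph.map_adj]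
  rfl

lemma mem_inl_union {A : Set V₁} {B : Set V₂} (hu : u₂ ∉ B) (hv : v₂ ∉ B) (a : V₁) :
    Sum.inl a ∈ Sum.inl '' A ∪ glueMap u₁ v₁ u₂ v₂ '' B ↔ a ∈ A := by
  constructor
  · rintro (⟨b, hb, hba⟩ | ⟨b, hb, hba⟩)
    · rw [Sum.inl.injEq] at hba; exact hba ▸ hb
    · rcases glueMap_eq_inl hba with ⟨rfl, rfl⟩ | ⟨rfl, rfl⟩
      · exact absurd hb hu
      · exact absurd hb hv
  · intro h; exact Or.inl ⟨a, h, rfl⟩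

lemma mem_glueMap_union (h1' : u₁ ≠ v₁) {A : Set V₁} {B : Set V₂} (hu : u₁ ∉ A) (hv : v₁ ∉ A)
    (b : V₂) :
    glueMap u₁ v₁ u₂ v₂ b ∈ Sum.inl '' A ∪ glueMap u₁ v₁ u₂ v₂ '' B ↔ b ∈ B := by
  constructor
  · rintro (⟨a, ha, hab⟩ | ⟨a, ha, hab⟩)
    · rcases glueMap_eq_inl hab.symm with ⟨rfl, rfl⟩ | ⟨rfl, rfl⟩
      · exact absurd ha hu
      · exact absurd ha hv
    · rwa [glueMap_inj h1' hab] at ha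
  · intro h; exact Or.inr ⟨b, h, rfl⟩

end Glue

section Glue2
variable {V₁ V₂ : Type*} [DecidableEq V₂] {u₁ v₁ : V₁} {u₂ v₂ : V₂}
variable {G₁ : SimpleGraph V₁} {G₂ : SimpleGraph V₂}

lemma glue_minsep {T₁ : Set V₁} {T₂ : Set V₂} (h1 : u₁ ≠ v₁) (h2 : u₂ ≠ v₂)
    (hT₁ : IsMinSeparator G₁ u₁ v₁ T₁) (hT₂ : IsMinSeparator G₂ u₂ v₂ T₂) :
    IsMinSeparator (glueGraph G₁ G₂ u₁ v₁ u₂ v₂ h1) (Sum.inl u₁) (Sum.inl v₁)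
      (Sum.inl '' T₁ ∪ glueMap u₁ v₁ u₂ v₂ '' T₂) := by
  obtain ⟨hu₁, hv₁, hsep₁, hmin₁⟩ := hT₁
  obtain ⟨hu₂, hv₂, hsep₂, hmin₂⟩ := hT₂
  set K : V₂ → V₁ ⊕ {x : V₂ // x ≠ u₂ ∧ x ≠ v₂} := glueMap u₁ v₁ u₂ v₂ with hK
  set Gg := glueGraph G₁ G₂ u₁ v₁ u₂ v₂ h1 with hGg
  set T : Set (V₁ ⊕ {x : V₂ // x ≠ u₂ ∧ x ≠ v₂}) := Sum.inl '' T₁ ∪ K '' T₂ with hT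
  have hinlT : ∀ b : V₁, Sum.inl b ∈ T ↔ b ∈ T₁ := fun b => mem_inl_union hu₂ hv₂ b
  have hKT : ∀ b : V₂, K b ∈ T ↔ b ∈ T₂ := fun b => mem_glueMap_union h1 hu₁ hv₁ b
  refine ⟨fun h => hu₁ ((hinlT u₁).1 h), fun h => hv₁ ((hinlT v₁).1 h), ?_, ?_⟩
  · -- Separation
    set C₁ := compOf G₁ T₁ u₁ with hC₁
    set C₂ := compOf G₂ T₂ u₂ with hC₂
    have hv₁C : v₁ ∉ C₁ := separates_iff.1 hsep₁
    have hv₂C : v₂ ∉ C₂ := separates_iff.1 hsep₂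
    set C : Set (V₁ ⊕ {x : V₂ // x ≠ u₂ ∧ x ≠ v₂}) := Sum.inl '' C₁ ∪ K '' C₂ with hC
    have hclosed : ∀ ⦃x y⦄, x ∈ C → Gg.Adj x y → y ∉ T → y ∈ C := by
      intro x y hx hxy hyT
      rw [hGg, glueGraph_adj] at hxy
      rcases hxy with ⟨a, b, hab, hax, hby⟩ | ⟨a, b, hab, hax, hby⟩
      · have hbT₁ : b ∉ T₁ := fun hb => hyT (hby ▸ (hinlT b).2 hb)
        rcases hx with ⟨c, hc, hca⟩ | ⟨c, hc, hca⟩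
        · have hceq : c = a := Sum.inl_injective (hca.trans hax.symm)
          subst hceq
          exact hby ▸ Or.inl ⟨b, compOf_adj hc hab hbT₁, rfl⟩
        · rcases glueMap_eq_inl (hca.trans hax.symm) with ⟨hcu, rfl⟩ | ⟨hcv, rfl⟩
          · exact hby ▸ Or.inl ⟨b, compOf_adj (mem_compOf_self hu₁) hab hbT₁, rfl⟩
          · exact absurd (hcv ▸ hc) hv₂C
      · have hbT₂ : b ∉ T₂ := fun hb => hyT (hby ▸ (hKT b).2 hb)
        rcases hx with ⟨c, hc, hca⟩ | ⟨c, hc, hca⟩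
        · rcases glueMap_eq_inl (hax.trans hca.symm) with ⟨hau, hcu⟩ | ⟨hav, hcv⟩
          · exact hby ▸ Or.inr ⟨b, compOf_adj (mem_compOf_self hu₂) (hau ▸ hab) hbT₂, rfl⟩
          · exact absurd (hcv ▸ hc) hv₁C
        · have hceq : c = a := glueMap_inj h1 (hca.trans hax.symm)
          subst hceq
          exact hby ▸ Or.inr ⟨b, compOf_adj hc hab hbT₂, rfl⟩
    intro p
    by_contra h
    push_neg at h
    have hstart : (Sum.inl u₁ : V₁ ⊕ {x : V₂ // x ≠ u₂ ∧ x ≠ v₂}) ∈ C :=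
      Or.inl ⟨u₁, mem_compOf_self hu₁, rfl⟩
    have hend := closed_walk hclosed p h hstart
    rcases hend with ⟨a, ha, hav⟩ | ⟨a, ha, hav⟩
    · exact hv₁C (Sum.inl_injective hav ▸ ha)
    · rcases glueMap_eq_inl hav with ⟨rfl, h'⟩ | ⟨rfl, _⟩
      · exact h1 h'.symm
      · exact hv₂C ha
  · -- Minimality
    intro T' hT' hsepT'
    set T₁' : Set V₁ := {a | Sum.inl a ∈ T'} with hT₁'
    set T₂' : Set V₂ := {a | K a ∈ T'} with hT₂'
    obtain ⟨z, hzT, hzT'⟩ := Set.exists_of_ssubset hT'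
    let hom₁ : G₁ →g Gg :=
      ⟨Sum.inl, fun h => glueGraph_adj.2 (Or.inl ⟨_, _, h, rfl, rfl⟩)⟩
    let hom₂ : G₂ →g Gg :=
      ⟨K, fun h => glueGraph_adj.2 (Or.inr ⟨_, _, h, rfl, rfl⟩)⟩
    rcases hzT with ⟨t, ht, htz⟩ | ⟨t, ht, htz⟩
    · have hsub : T₁' ⊂ T₁ := by
        constructor
        · intro a ha
          exact (hinlT a).1 (hT'.1 ha)
        · intro hle
          exact hzT' (htz ▸ hle ht)
      apply hmin₁ T₁' hsub
      intro p
      obtain ⟨x, hx, hxT'⟩ := hsepT' ((p.map hom₁).copy rfl rfl)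
      rw [SimpleGraph.Walk.support_copy, SimpleGraph.Walk.support_map, List.mem_map] at hx
      obtain ⟨s, hs, hsx⟩ := hx
      refine ⟨s, hs, ?_⟩
      rw [← hsx] at hxT'
      exact hxT'
    · have hsub : T₂' ⊂ T₂ := by
        constructor
        · intro a ha
          exact (hKT a).1 (hT'.1 ha)
        · intro hle
          exact hzT' (htz ▸ hle ht)
      have hgoal : Separates G₂ u₂ v₂ T₂' := by
        intro p
        obtain ⟨x, hx, hxT'⟩ :=
          hsepT' ((p.map hom₂).copy (glueMap_u (u₁ := u₁) (v₁ := v₁)) (glueMap_v h2))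
        rw [SimpleGraph.Walk.support_copy, SimpleGraph.Walk.support_map, List.mem_map] at hx
        obtain ⟨s, hs, hsx⟩ := hx
        refine ⟨s, hs, ?_⟩
        rw [← hsx] at hxT'
        exact hxT'
      exact hmin₂ T₂' hsub hgoal

end Glue2

lemma ncard_sprod {α β : Type*} (s : Set α) (t : Set β) :
    (s ×ˢ t).ncard = s.ncard * t.ncard := by
  rw [← Nat.card_coe_set_eq, ← Nat.card_coe_set_eq, ← Nat.card_coe_set_eq,
    ← Nat.card_prod]
  exact Nat.card_congr (Equiv.Set.prod s t)

section Count
variable {V₁ V₂ : Type*} [DecidableEq V₂] {u₁ v₁ : V₁} {u₂ v₂ : V₂}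
variable {G₁ : SimpleGraph V₁} {G₂ : SimpleGraph V₂}

lemma mc_glue [Finite V₁] [Finite V₂] (h1 : u₁ ≠ v₁) (h2 : u₂ ≠ v₂) :
    mc G₁ u₁ v₁ * mc G₂ u₂ v₂ ≤
      mc (glueGraph G₁ G₂ u₁ v₁ u₂ v₂ h1) (Sum.inl u₁) (Sum.inl v₁) := by
  set S₁ := {T : Set V₁ | IsMinSeparator G₁ u₁ v₁ T} with hS₁
  set S₂ := {T : Set V₂ | IsMinSeparator G₂ u₂ v₂ T} with hS₂
  set F : Set V₁ × Set V₂ → Set (V₁ ⊕ {x : V₂ // x ≠ u₂ ∧ x ≠ v₂}) :=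
    fun p => Sum.inl '' p.1 ∪ glueMap u₁ v₁ u₂ v₂ '' p.2 with hF
  have hmap : F '' (S₁ ×ˢ S₂) ⊆
      {T | IsMinSeparator (glueGraph G₁ G₂ u₁ v₁ u₂ v₂ h1) (Sum.inl u₁) (Sum.inl v₁) T} := by
    rintro _ ⟨⟨A, B⟩, ⟨hA, hB⟩, rfl⟩
    exact glue_minsep h1 h2 hA hB
  have hinj : Set.InjOn F (S₁ ×ˢ S₂) := by
    rintro ⟨A, B⟩ ⟨hA, hB⟩ ⟨A', B'⟩ ⟨hA', hB'⟩ h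
    have e1 : A = A' := by
      ext a
      rw [← mem_inl_union (u₁ := u₁) (v₁ := v₁) hB.1 hB.2.1 a,
        ← mem_inl_union (u₁ := u₁) (v₁ := v₁) hB'.1 hB'.2.1 a]
      show Sum.inl a ∈ F (A, B) ↔ Sum.inl a ∈ F (A', B')
      rw [h]
    have e2 : B = B' := by
      ext b
      rw [← mem_glueMap_union h1 hA.1 hA.2.1 b, ← mem_glueMap_union h1 hA'.1 hA'.2.1 b]
      show glueMap u₁ v₁ u₂ v₂ b ∈ F (A, B) ↔ glueMap u₁ v₁ u₂ v₂ b ∈ F (A', B')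
      rw [h]
    simp [e1, e2]
  calc mc G₁ u₁ v₁ * mc G₂ u₂ v₂ = (S₁ ×ˢ S₂).ncard := (ncard_sprod S₁ S₂).symm
    _ = (F '' (S₁ ×ˢ S₂)).ncard := (Set.ncard_image_of_injOn hinj).symm
    _ ≤ _ := Set.ncard_le_ncard hmap (Set.toFinite _)

end Count

lemma g_set_finite (n : ℕ) :
    {k | ∃ (G : SimpleGraph (Fin (n + 2))) (u v : Fin (n + 2)), u ≠ v ∧ mc G u v = k}.Finite := by
  apply Set.Finite.subset (Set.finite_range
    (fun x : SimpleGraph (Fin (n + 2)) × Fin (n + 2) × Fin (n + 2) => mc x.1 x.2.1 x.2.2))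
  rintro k ⟨G, u, v, _, rfl⟩
  exact ⟨(G, u, v), rfl⟩

lemma g_set_nonempty (n : ℕ) :
    {k | ∃ (G : SimpleGraph (Fin (n + 2))) (u v : Fin (n + 2)), u ≠ v ∧ mc G u v = k}.Nonempty :=
  ⟨mc ⊥ 0 1, ⊥, 0, 1, zero_ne_one, rfl⟩

lemma g_mem (n : ℕ) :
    ∃ (G : SimpleGraph (Fin (n + 2))) (u v : Fin (n + 2)), u ≠ v ∧ mc G u v = g n := by
  have := Nat.sSup_mem (g_set_nonempty n) (g_set_finite n).bddAbove
  exact this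

lemma le_g {n k : ℕ}
    (h : k ∈ {k | ∃ (G : SimpleGraph (Fin (n + 2))) (u v : Fin (n + 2)), u ≠ v ∧ mc G u v = k}) :
    k ≤ g n :=
  le_csSup (g_set_finite n).bddAbove h

lemma card_subtype_ne_ne {m : ℕ} {u₂ v₂ : Fin (m + 2)} (h2 : u₂ ≠ v₂) :
    Fintype.card {x : Fin (m + 2) // x ≠ u₂ ∧ x ≠ v₂} = m := by
  rw [Fintype.card_subtype]
  have : Finset.filter (fun x => x ≠ u₂ ∧ x ≠ v₂) Finset.univ
      = ({u₂, v₂} : Finset (Fin (m + 2)))ᶜ := by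
    ext x
    simp [not_or]
  rw [this, Finset.card_compl, Finset.card_insert_of_notMem (by simpa using h2),
    Finset.card_singleton, Fintype.card_fin]
  omega

/-- `g` is super-multiplicative: `g (n + m) ≥ g n * g m` for all `n, m ≥ 1`. -/
theorem g_supermultiplicative (n m : ℕ) (hn : 1 ≤ n) (hm : 1 ≤ m) :
    g n * g m ≤ g (n + m) := by
  classical
  obtain ⟨G₁, u₁, v₁, h1, hg1⟩ := g_mem n
  obtain ⟨G₂, u₂, v₂, h2, hg2⟩ := g_mem m
  have hcard : Fintype.card (Fin (n + 2) ⊕ {x : Fin (m + 2) // x ≠ u₂ ∧ x ≠ v₂})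
      = n + m + 2 := by
    rw [Fintype.card_sum, Fintype.card_fin, card_subtype_ne_ne h2]
    omega
  let e : (Fin (n + 2) ⊕ {x : Fin (m + 2) // x ≠ u₂ ∧ x ≠ v₂}) ≃ Fin (n + m + 2) :=
    Fintype.equivFinOfCardEq hcard
  set Gg := glueGraph G₁ G₂ u₁ v₁ u₂ v₂ h1 with hGg
  let φ : Gg ≃g Gg.map e.toEmbedding := SimpleGraph.Iso.map e Gg
  have hmc : mc (Gg.map e.toEmbedding) (φ (Sum.inl u₁)) (φ (Sum.inl v₁))
      = mc Gg (Sum.inl u₁) (Sum.inl v₁) := mc_map_eq φ _ _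
  have hne : φ (Sum.inl u₁) ≠ φ (Sum.inl v₁) := by
    intro h
    exact h1 (Sum.inl_injective (φ.injective h))
  have hmem : mc (Gg.map e.toEmbedding) (φ (Sum.inl u₁)) (φ (Sum.inl v₁)) ∈
      {k | ∃ (G : SimpleGraph (Fin (n + m + 2))) (u v : Fin (n + m + 2)),
        u ≠ v ∧ mc G u v = k} :=
    ⟨Gg.map e.toEmbedding, φ (Sum.inl u₁), φ (Sum.inl v₁), hne, rfl⟩
  have hle := le_g (n := n + m) hmem
  have hglue := mc_glue (G₁ := G₁) (G₂ := G₂) h1 h2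
  rw [hg1, hg2] at hglue
  calc g n * g m ≤ mc Gg (Sum.inl u₁) (Sum.inl v₁) := hglue
    _ = mc (Gg.map e.toEmbedding) (φ (Sum.inl u₁)) (φ (Sum.inl v₁)) := hmc.symm
    _ ≤ g (n + m) := hle
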